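/- Integral representation: B_{n,r} = \frac{2 n!}{\pi e} \mathrm{Im} \int_0^\pi \exp(e^{e^{i\theta}}) e^{r e^{i\theta}} \sin(n\theta)\, d\theta. -/

import Mathlib

/-- `rS r n k` is the r-Stirling number of the second kind `S_r(n+r, k+r)`. -/
def rS (r : ℕ) : ℕ → ℕ → ℕ
  | 0, 0 => 1
  | 0, _ + 1 => 0
  | n + 1, 0 => r * rS r n 0
  | n + 1, k + 1 => (k + 1 + r) * rS r n (k + 1) + rS r n k

/-- The r-Stirling number of the second kind `S_r(n,k)`. -/
def rStirling (r n k : ℕ) : ℕ :=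
  if r ≤ n ∧ r ≤ k then rS r (n - r) (k - r) else 0

/-- The r-Bell polynomial `B_{n,r}(x)` as a real function. -/
def rBellPoly (r n : ℕ) (x : ℝ) : ℝ :=
  ∑ k ∈ Finset.range (n + 1), (rS r n k : ℝ) * x ^ k

/-- The r-Bell number `B_{n,r}`. -/
def rBell (r n : ℕ) : ℕ :=
  ∑ k ∈ Finset.range (n + 1), rS r n k

/-! Dobinski's formula `∑ₖ (k + r)ⁿ / k! = e B_{n,r}` comes from expanding `(m + r)ⁿ` in the falling
factorials of `m`, whose coefficients are the r-Stirling numbers, together with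
`∑ₘ m^{\underline k} / m! = e`. For the integral, expand `exp (exp z) * exp (r z)` as
`∑ₖ exp ((k + r) z) / k!` and each `exp (x e^{iθ})` as `∑ₘ xᵐ e^{imθ} / m!`; the orthogonality
of the `sin (m θ)` on `[0, π]` extracts `(π / 2) (k + r)ⁿ / n!` from the `k`-th term. -/

open Finset Nat

theorem rS_eq_zero_of_lt (r : ℕ) {n k : ℕ} (h : n < k) : rS r n k = 0 := by
  induction n generalizing k with
  | zero => obtain ⟨k, rfl⟩ := Nat.exists_eq_succ_of_ne_zero (by omega : k ≠ 0); rfl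
  | succ n ih =>
    obtain ⟨k, rfl⟩ := Nat.exists_eq_succ_of_ne_zero (by omega : k ≠ 0)
    rw [rS, ih (by omega), ih (by omega), mul_zero]

theorem add_mul_descFactorial (m r k : ℕ) :
    (m + r) * m.descFactorial k = m.descFactorial (k + 1) + (k + r) * m.descFactorial k := by
  rcases le_or_gt k m with h | h
  · obtain ⟨j, rfl⟩ := Nat.exists_eq_add_of_le h
    rw [Nat.descFactorial_succ, Nat.add_sub_cancel_left]
    ring
  · simp [Nat.descFactorial_eq_zero_iff_lt.mpr h]

theorem add_pow_eq_sum_rS_mul_descFactorial (r n m : ℕ) :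
    (m + r) ^ n = ∑ k ∈ range (n + 1), rS r n k * m.descFactorial k := by
  induction n with
  | zero => simp [rS]
  | succ n ih =>
    have hlast : rS r n (n + 1) = 0 := rS_eq_zero_of_lt r (lt_add_one n)
    rw [pow_succ', ih, mul_sum]
    simp_rw [mul_left_comm (m + r), add_mul_descFactorial, mul_add, mul_left_comm (rS r n _),
      sum_add_distrib]
    rw [sum_range_succ' _ (n + 1), sum_range_succ' (fun k => (k + r) * _)]
    simp only [rS, add_mul _ (rS r n _), mul_assoc, sum_add_distrib]
    rw [sum_range_succ (fun k => (k + 1 + r) * _), hlast]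
    ring

theorem hasSum_descFactorial_div_factorial (k : ℕ) :
    HasSum (fun m : ℕ => (m.descFactorial k : ℝ) / m !) (Real.exp 1) := by
  rw [← hasSum_nat_add_iff' k]
  have hlow : ∑ i ∈ range k, (i.descFactorial k : ℝ) / i ! = 0 :=
    sum_eq_zero fun i hi => by simp [Nat.descFactorial_eq_zero_iff_lt.mpr (mem_range.mp hi)]
  have hshift (j : ℕ) : ((j + k).descFactorial k : ℝ) / (j + k)! = 1 / j ! := by
    rw [← Nat.factorial_mul_descFactorial (Nat.le_add_left k j), Nat.add_sub_cancel]
    push_cast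
    field_simp
  simpa [hlow, hshift, Real.exp_eq_exp_ℝ] using NormedSpace.expSeries_div_hasSum_exp (1 : ℝ)

theorem hasSum_add_pow_div_factorial (r n : ℕ) :
    HasSum (fun m : ℕ => ((m : ℝ) + r) ^ n / m !) (Real.exp 1 * rBell r n) := by
  have hexpand : (fun m : ℕ => ((m : ℝ) + r) ^ n / m !) =
      fun m => ∑ k ∈ range (n + 1), (rS r n k : ℝ) * (m.descFactorial k / m !) := by
    ext m
    rw [← Nat.cast_add, ← Nat.cast_pow, add_pow_eq_sum_rS_mul_descFactorial]
    push_cast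
    simp only [sum_div, mul_div_assoc]
  rw [hexpand, rBell, Nat.cast_sum, mul_comm, sum_mul]
  exact hasSum_sum fun k _ => (hasSum_descFactorial_div_factorial k).mul_left _

open Real intervalIntegral
open scoped Complex
open Complex (I)

theorem integral_cos_int_mul (k : ℤ) :
    ∫ x in (0 : ℝ)..π, Real.cos (k * x) = if k = 0 then π else 0 := by
  split_ifs with hk
  · simp [hk]
  · have hk' : (k : ℝ) ≠ 0 := Int.cast_ne_zero.mpr hk
    simp [integral_comp_mul_left (fun x => Real.cos x) hk', Real.sin_int_mul_pi]

theorem integral_sin_mul_sin (m : ℕ) {n : ℕ} (hn : n ≠ 0) :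
    ∫ x in (0 : ℝ)..π, Real.sin (m * x) * Real.sin (n * x) = if m = n then π / 2 else 0 := by
  have hprod (x : ℝ) : Real.sin (m * x) * Real.sin (n * x) =
      (Real.cos (((m - n : ℤ) : ℝ) * x) - Real.cos (((m + n : ℤ) : ℝ) * x)) / 2 := by
    push_cast
    rw [sub_mul, add_mul, Real.cos_sub, Real.cos_add]
    ring
  have hcos (k : ℤ) : IntervalIntegrable (fun x => Real.cos (k * x)) MeasureTheory.volume 0 π :=
    (Real.continuous_cos.comp (continuous_const_mul _)).intervalIntegrable _ _
  simp_rw [hprod]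
  rw [integral_div, integral_sub (hcos _) (hcos _), integral_cos_int_mul, integral_cos_int_mul,
    if_neg (show (m + n : ℤ) ≠ 0 by omega)]
  by_cases h : m = n
  · simp [h]
  · simp [h, sub_eq_zero]

theorem hasSum_intervalIntegral_of_summable_bound {ι E : Type*} [Countable ι]
    [NormedAddCommGroup E] [NormedSpace ℝ E] [CompleteSpace E] {f : ι → ℝ → E} {F : ℝ → E}
    {bound : ι → ℝ} (hf : ∀ i, Continuous (f i)) (hbound : ∀ i t, ‖f i t‖ ≤ bound i)
    (hs : Summable bound) (hF : ∀ t, HasSum (fun i => f i t) (F t)) (a b : ℝ) :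
    HasSum (fun i => ∫ t in a..b, f i t) (∫ t in a..b, F t) :=
  hasSum_integral_of_dominated_convergence (fun i _ => bound i)
    (fun i => (hf i).aestronglyMeasurable) (fun i => .of_forall fun t _ => hbound i t)
    (.of_forall fun _ _ => hs) intervalIntegrable_const (.of_forall fun t _ => hF t)

theorem im_integral_mul_sin_of_hasSum {a : ℕ → ℝ} (ha : Summable a) {f : ℝ → ℂ}
    (hf : ∀ θ : ℝ, HasSum (fun m : ℕ => (a m : ℂ) * cexp (m * θ * I)) (f θ)) {n : ℕ} (hn : n ≠ 0) :
    (∫ θ in (0 : ℝ)..π, f θ * Real.sin (n * θ)).im = π / 2 * a n := by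
  have hcont (m : ℕ) :
      Continuous fun θ : ℝ => (a m : ℂ) * cexp (m * θ * I) * Real.sin (n * θ) := by
    fun_prop
  have hbound (m : ℕ) (θ : ℝ) : ‖(a m : ℂ) * cexp (m * θ * I) * Real.sin (n * θ)‖ ≤ |a m| := by
    have : ‖cexp (m * θ * I)‖ = 1 := mod_cast Complex.norm_exp_ofReal_mul_I (m * θ)
    simp only [norm_mul, Complex.norm_real, Real.norm_eq_abs, this, mul_one]
    exact mul_le_of_le_one_right (abs_nonneg (a m)) (Real.abs_sin_le_one (n * θ))
  have hterm (m : ℕ) :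
      (∫ θ in (0 : ℝ)..π, (a m : ℂ) * cexp (m * θ * I) * Real.sin (n * θ)).im =
        if m = n then π / 2 * a n else 0 := by
    rw [← Complex.imCLM_apply, ← Complex.imCLM.intervalIntegral_comp_comm
      ((hcont m).intervalIntegrable _ _)]
    have him (θ : ℝ) : Complex.imCLM ((a m : ℂ) * cexp (m * θ * I) * Real.sin (n * θ)) =
        a m * (Real.sin (m * θ) * Real.sin (n * θ)) := by
      rw [Complex.imCLM_apply, ← Complex.ofReal_natCast, ← Complex.ofReal_mul]
      simp only [Complex.mul_im, Complex.ofReal_re, Complex.ofReal_im, Complex.exp_ofReal_mul_I_re,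
        Complex.exp_ofReal_mul_I_im]
      ring
    simp_rw [him, integral_const_mul, integral_sin_mul_sin m hn]
    split_ifs with h <;> simp [h, mul_comm]
  have hsum := Complex.hasSum_im (hasSum_intervalIntegral_of_summable_bound hcont hbound ha.abs
    (fun θ => (hf θ).mul_right _) 0 π)
  simp only [hterm] at hsum
  exact hsum.unique (hasSum_ite_eq n _)

theorem hasSum_exp_mul_exp_mul_I (x θ : ℝ) :
    HasSum (fun m : ℕ => ((x ^ m / m ! : ℝ) : ℂ) * cexp (m * θ * I)) (cexp (x * cexp (θ * I))) := by
  have h := NormedSpace.expSeries_div_hasSum_exp (x * cexp (θ * I))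
  rw [← Complex.exp_eq_exp_ℂ] at h
  refine h.congr_fun fun m => ?_
  rw [mul_pow, ← Complex.exp_nat_mul, ← mul_assoc]
  push_cast
  ring

theorem im_integral_exp_mul_exp_mul_sin (x : ℝ) {n : ℕ} (hn : n ≠ 0) :
    (∫ θ in (0 : ℝ)..π, cexp (x * cexp (θ * I)) * Real.sin (n * θ)).im = π / 2 * (x ^ n / n !) :=
  im_integral_mul_sin_of_hasSum (Real.summable_pow_div_factorial x) (hasSum_exp_mul_exp_mul_I x) hn

theorem hasSum_exp_nat_mul_add_div_factorial (z w : ℂ) :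
    HasSum (fun k : ℕ => cexp (k * z + w) / k !) (cexp (cexp z) * cexp w) := by
  have h := NormedSpace.expSeries_div_hasSum_exp (cexp z)
  rw [← Complex.exp_eq_exp_ℂ] at h
  refine (h.mul_right (cexp w)).congr_fun fun k => ?_
  rw [Complex.exp_add, Complex.exp_nat_mul]
  ring

theorem norm_exp_mul_exp_mul_I_le {x : ℝ} (hx : 0 ≤ x) (θ : ℝ) :
    ‖cexp (x * cexp (θ * I))‖ ≤ Real.exp x := by
  rw [Complex.norm_exp, Real.exp_le_exp]
  simpa [Complex.exp_ofReal_mul_I_re] using mul_le_of_le_one_right hx (Real.cos_le_one θ)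

theorem hasSum_integral_exp_add_mul_sin_div_factorial {x : ℝ} (hx : 0 ≤ x) (n : ℕ) :
    HasSum (fun k : ℕ =>
        ∫ θ in (0 : ℝ)..π, cexp (((k + x : ℝ) : ℂ) * cexp (θ * I)) * Real.sin (n * θ) / k !)
      (∫ θ in (0 : ℝ)..π,
        cexp (cexp (cexp (θ * I))) * cexp (x * cexp (θ * I)) * Real.sin (n * θ)) := by
  refine hasSum_intervalIntegral_of_summable_bound (by fun_prop) (fun k θ => ?_)
    ((Real.summable_pow_div_factorial (Real.exp 1)).mul_left (Real.exp x)) (fun θ => ?_) 0 π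
  · rw [← Real.exp_nat_mul, mul_one, mul_div_assoc', ← Real.exp_add, add_comm]
    simp only [norm_div, norm_mul, Complex.norm_real, Real.norm_eq_abs, Complex.norm_natCast]
    gcongr
    exact (mul_le_of_le_one_right (norm_nonneg _) (Real.abs_sin_le_one _)).trans
      (norm_exp_mul_exp_mul_I_le (by positivity) θ)
  · refine ((hasSum_exp_nat_mul_add_div_factorial (cexp (θ * I)) (x * cexp (θ * I))).mul_right
      (Real.sin (n * θ) : ℂ)).congr_fun fun k => ?_
    push_cast
    rw [add_mul, div_mul_eq_mul_div]

open Complex in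
theorem rBell_integral (n r : ℕ) (hn : 1 ≤ n) :
    (rBell r n : ℝ) =
      (2 * n.factorial) / (Real.pi * Real.exp 1) *
        (∫ θ in (0:ℝ)..Real.pi,
            Complex.exp (Complex.exp (Complex.exp (θ * I))) *
              Complex.exp ((r : ℂ) * Complex.exp (θ * I)) *
              (Real.sin (n * θ) : ℂ)).im := by
  have hterm (k : ℕ) :
      (∫ θ in (0 : ℝ)..π, cexp (((k + r : ℝ) : ℂ) * cexp (θ * I)) * Real.sin (n * θ) / k !).im =
        π / (2 * n !) * (((k : ℝ) + r) ^ n / k !) := by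
    rw [intervalIntegral.integral_div, Complex.div_natCast_im,
      im_integral_exp_mul_exp_mul_sin _ (Nat.one_le_iff_ne_zero.mp hn)]
    ring
  have hsum := Complex.hasSum_im
    (hasSum_integral_exp_add_mul_sin_div_factorial (Nat.cast_nonneg r) n)
  simp only [hterm, Complex.ofReal_natCast] at hsum
  rw [hsum.unique ((hasSum_add_pow_div_factorial r n).mul_left _)]
  field_simp
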